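/- If ε λ'(0) ρ'(1) > 1, then there exists γ > 0 such that for every initial value p^{(0)} ∈ (0, 1], the density evolution iterates p^{(ℓ)} = ε λ(1 − ρ(1 − p^{(ℓ−1)})) satisfy liminf_{ℓ→∞} p^{(ℓ)} ≥ γ. -/

import Mathlib

/-!
The update map `F` fixes `0` with `F'(0) = ε λ'(0) ρ'(1) > 1`, so `p < F p` on some `(0, γ]`.
Since `F` is monotone on `[0, 1]`, `F γ > γ` makes `[γ, 1]` invariant. An orbit started in
`(0, 1]` that stayed below `γ` would increase to a fixed point of `F` in `(0, γ]`, and there is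
none; so every orbit enters `[γ, 1]` and stays there.
-/

open Filter Set Topology Polynomial

namespace Polynomial

section OrderedSemiring

variable {R : Type*} [CommSemiring R] [PartialOrder R] [IsOrderedRing R] {p : R[X]}

lemma eval_nonneg_of_coeff_nonneg (hp : ∀ i, 0 ≤ p.coeff i) {x : R} (hx : 0 ≤ x) :
    0 ≤ p.eval x := by
  rw [eval_eq_sum_range]
  exact Finset.sum_nonneg fun i _ => mul_nonneg (hp i) (pow_nonneg hx i)

lemma eval_le_eval_of_coeff_nonneg (hp : ∀ i, 0 ≤ p.coeff i) {x y : R} (hx : 0 ≤ x)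
    (hxy : x ≤ y) : p.eval x ≤ p.eval y := by
  simp only [eval_eq_sum_range]
  gcongr with i
  exact hp i

end OrderedSemiring

lemma one_sub_eval_one_sub_mem_Icc {q : ℝ[X]} (hq : ∀ i, 0 ≤ q.coeff i) (hq1 : q.eval 1 = 1)
    {p : ℝ} (hp : p ∈ Icc 0 1) : 1 - q.eval (1 - p) ∈ Icc 0 1 := by
  have hle : q.eval (1 - p) ≤ q.eval 1 :=
    eval_le_eval_of_coeff_nonneg hq (sub_nonneg.2 hp.2) (by linarith [hp.1])
  have hnonneg : 0 ≤ q.eval (1 - p) := eval_nonneg_of_coeff_nonneg hq (sub_nonneg.2 hp.2)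
  constructor <;> linarith

end Polynomial

section Iteration

variable {f : ℝ → ℝ} {γ : ℝ}

lemma mapsTo_Icc_of_lt_self (hmaps : MapsTo f (Icc 0 1) (Icc 0 1))
    (hmono : MonotoneOn f (Icc 0 1)) (hγ : γ ∈ Ioc 0 1) (hγf : γ < f γ) :
    MapsTo f (Icc γ 1) (Icc γ 1) := fun p hp =>
  have hp01 : p ∈ Icc (0 : ℝ) 1 := ⟨hγ.1.le.trans hp.1, hp.2⟩
  ⟨hγf.le.trans (hmono (Ioc_subset_Icc_self hγ) hp01 hp.1), (hmaps hp01).2⟩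

lemma mapsTo_Ioc_of_lt_self (hmaps : MapsTo f (Icc 0 1) (Icc 0 1))
    (hmono : MonotoneOn f (Icc 0 1)) (hγ : γ ∈ Ioc 0 1) (hgrow : ∀ p ∈ Ioc 0 γ, p < f p) :
    MapsTo f (Ioc 0 1) (Ioc 0 1) := by
  intro p hp
  refine ⟨?_, (hmaps (Ioc_subset_Icc_self hp)).2⟩
  rcases le_or_gt p γ with hpγ | hγp
  · exact hp.1.trans (hgrow p ⟨hp.1, hpγ⟩)
  · have hfp := mapsTo_Icc_of_lt_self hmaps hmono hγ (hgrow γ ⟨hγ.1, le_rfl⟩) ⟨hγp.le, hp.2⟩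
    exact hγ.1.trans_le hfp.1

lemma exists_le_iterate_of_lt_self (hcont : Continuous f) (hmaps : MapsTo f (Icc 0 1) (Icc 0 1))
    (hmono : MonotoneOn f (Icc 0 1)) (hγ : γ ∈ Ioc 0 1) (hgrow : ∀ p ∈ Ioc 0 γ, p < f p)
    {p₀ : ℝ} (hp₀ : p₀ ∈ Ioc 0 1) : ∃ N, γ ≤ f^[N] p₀ := by
  by_contra! hbelow
  have hpos : ∀ n, 0 < f^[n] p₀ := fun n =>
    ((mapsTo_Ioc_of_lt_self hmaps hmono hγ hgrow).iterate n hp₀).1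
  have hgrow' : ∀ n, f^[n] p₀ < f (f^[n] p₀) := fun n => hgrow _ ⟨hpos n, (hbelow n).le⟩
  have hmono_orbit : Monotone fun n => f^[n] p₀ := by
    refine monotone_nat_of_le_succ fun n => ?_
    rw [Function.iterate_succ_apply']
    exact (hgrow' n).le
  have hbdd : BddAbove (range fun n => f^[n] p₀) := ⟨γ, by
    rintro _ ⟨n, rfl⟩
    exact (hbelow n).le⟩
  set L := ⨆ n, f^[n] p₀
  have hfix : Function.IsFixedPt f L :=
    isFixedPt_of_tendsto_iterate (tendsto_atTop_ciSup hmono_orbit hbdd) hcont.continuousAt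
  have hL : L ∈ Ioc 0 γ :=
    ⟨(hpos 0).trans_le (le_ciSup hbdd 0), ciSup_le fun n => (hbelow n).le⟩
  exact (hgrow L hL).ne hfix.symm

lemma le_liminf_iterate_of_lt_self (hcont : Continuous f) (hmaps : MapsTo f (Icc 0 1) (Icc 0 1))
    (hmono : MonotoneOn f (Icc 0 1)) (hγ : γ ∈ Ioc 0 1) (hgrow : ∀ p ∈ Ioc 0 γ, p < f p)
    {p₀ : ℝ} (hp₀ : p₀ ∈ Ioc 0 1) : γ ≤ liminf (fun n => f^[n] p₀) atTop := by
  have horbit n : f^[n] p₀ ∈ Ioc 0 1 :=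
    (mapsTo_Ioc_of_lt_self hmaps hmono hγ hgrow).iterate n hp₀
  have hinv := mapsTo_Icc_of_lt_self hmaps hmono hγ (hgrow γ ⟨hγ.1, le_rfl⟩)
  obtain ⟨N, hN⟩ := exists_le_iterate_of_lt_self hcont hmaps hmono hγ hgrow hp₀
  have hN' : f^[N] p₀ ∈ Icc γ 1 := ⟨hN, (horbit N).2⟩
  refine le_liminf_of_le (isCoboundedUnder_ge_of_le atTop fun n => (horbit n).2) ?_
  filter_upwards [eventually_ge_atTop N] with n hn
  obtain ⟨k, rfl⟩ := Nat.exists_eq_add_of_le hn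
  rw [add_comm, Function.iterate_add_apply]
  exact (hinv.iterate k hN').1

end Iteration

lemma eventually_lt_self_of_one_lt_deriv {f : ℝ → ℝ} {f' : ℝ} (hf₀ : f 0 = 0)
    (hf : HasDerivAt f f' 0) (hf' : 1 < f') : ∀ᶠ p in 𝓝[>] 0, p < f p := by
  filter_upwards [hf.tendsto_slope_zero_right.eventually (eventually_gt_nhds hf'),
    self_mem_nhdsWithin] with p hslope (hp : 0 < p)
  rw [zero_add, hf₀, sub_zero, smul_eq_mul, ← div_eq_inv_mul, one_lt_div hp] at hslope
  exact hslope

def densityEvolution (ε : ℝ) (lam rho : ℝ[X]) (p : ℝ) : ℝ :=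
  ε * lam.eval (1 - rho.eval (1 - p))

section DensityEvolution

variable {ε : ℝ} {lam rho : ℝ[X]}

lemma continuous_densityEvolution : Continuous (densityEvolution ε lam rho) := by
  unfold densityEvolution
  fun_prop

lemma densityEvolution_zero (hlam0 : lam.eval 0 = 0) (hrho1 : rho.eval 1 = 1) :
    densityEvolution ε lam rho 0 = 0 := by
  simp [densityEvolution, hrho1, hlam0]

lemma mapsTo_densityEvolution_Icc (hlam : ∀ i, 0 ≤ lam.coeff i) (hrho : ∀ i, 0 ≤ rho.coeff i)
    (hlam1 : lam.eval 1 = 1) (hrho1 : rho.eval 1 = 1) (hε : ε ∈ Icc 0 1) :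
    MapsTo (densityEvolution ε lam rho) (Icc 0 1) (Icc 0 1) := by
  intro p hp
  obtain ⟨hx₀, hx₁⟩ := one_sub_eval_one_sub_mem_Icc hrho hrho1 hp
  have hlam_nonneg := eval_nonneg_of_coeff_nonneg hlam hx₀
  have hlam_le : lam.eval (1 - rho.eval (1 - p)) ≤ lam.eval 1 :=
    eval_le_eval_of_coeff_nonneg hlam hx₀ hx₁
  rw [hlam1] at hlam_le
  exact ⟨mul_nonneg hε.1 hlam_nonneg, mul_le_one₀ hε.2 hlam_nonneg hlam_le⟩

lemma monotoneOn_densityEvolution (hlam : ∀ i, 0 ≤ lam.coeff i) (hrho : ∀ i, 0 ≤ rho.coeff i)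
    (hrho1 : rho.eval 1 = 1) (hε : 0 ≤ ε) :
    MonotoneOn (densityEvolution ε lam rho) (Icc 0 1) := by
  intro p hp q hq hpq
  have hrho_le : rho.eval (1 - q) ≤ rho.eval (1 - p) :=
    eval_le_eval_of_coeff_nonneg hrho (sub_nonneg.2 hq.2) (by linarith)
  refine mul_le_mul_of_nonneg_left ?_ hε
  exact eval_le_eval_of_coeff_nonneg hlam (one_sub_eval_one_sub_mem_Icc hrho hrho1 hp).1
    (by linarith)

lemma hasDerivAt_densityEvolution_zero (hrho1 : rho.eval 1 = 1) :
    HasDerivAt (densityEvolution ε lam rho)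
      (ε * lam.derivative.eval 0 * rho.derivative.eval 1) 0 := by
  have hinner : HasDerivAt (fun p => 1 - rho.eval (1 - p)) (rho.derivative.eval 1) 0 := by
    simpa using ((rho.hasDerivAt (1 - 0)).comp 0 ((hasDerivAt_id 0).const_sub 1)).const_sub 1
  have hin0 : 1 - rho.eval (1 - 0) = 0 := by simp [hrho1]
  have := ((lam.hasDerivAt _).comp 0 hinner).const_mul ε
  rw [hin0, ← mul_assoc] at this
  exact this

end DensityEvolution

/-- Stability (diverging side): if `ε λ'(0) ρ'(1) > 1` then there is `γ > 0` such that
for every initial value `p0 ∈ (0,1]` the density-evolution iterates satisfy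
`liminf p^{(ℓ)} ≥ γ`. -/
theorem stmt_12 (lam rho : Polynomial ℝ)
    (hlam : ∀ i, 0 ≤ lam.coeff i) (hrho : ∀ i, 0 ≤ rho.coeff i)
    (hlam0 : lam.eval 0 = 0) (hlam1 : lam.eval 1 = 1) (hrho1 : rho.eval 1 = 1)
    (ε : ℝ) (hε : ε ∈ Set.Ioc (0 : ℝ) 1)
    (hstab : 1 < ε * lam.derivative.eval 0 * rho.derivative.eval 1) :
    ∃ γ > (0 : ℝ), ∀ p0 ∈ Set.Ioc (0 : ℝ) 1,
      γ ≤ liminf (fun ℓ : ℕ =>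
          (fun p : ℝ => ε * lam.eval (1 - rho.eval (1 - p)))^[ℓ] p0) atTop := by
  obtain ⟨u, hu, hgrow⟩ := mem_nhdsGT_iff_exists_Ioc_subset.1 <|
    eventually_lt_self_of_one_lt_deriv (densityEvolution_zero hlam0 hrho1)
      (hasDerivAt_densityEvolution_zero hrho1) hstab
  have hγ : min u 1 ∈ Ioc (0 : ℝ) 1 := ⟨lt_min hu one_pos, min_le_right u 1⟩
  refine ⟨min u 1, hγ.1, fun p₀ hp₀ => ?_⟩
  exact le_liminf_iterate_of_lt_self continuous_densityEvolution
    (mapsTo_densityEvolution_Icc hlam hrho hlam1 hrho1 (Ioc_subset_Icc_self hε))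
    (monotoneOn_densityEvolution hlam hrho hrho1 hε.1.le) hγ
    (fun p hp => hgrow (Ioc_subset_Ioc_right (min_le_left u 1) hp)) hp₀
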